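/- Consider the rank-one least-squares problem min_{a ∈ ℝ^I, b ∈ ℝ^J, c ∈ ℝ^K} (1/2)·Σ_{i,j,k} (T_{ijk} − a_i b_j c_k)². A minimizer always exists. Moreover, unit vectors b ∈ ℝ^J, c ∈ ℝ^K together with a := T•₂,₃(b,c) form a minimizer if and only if (b,c) maximizes the function (b,c) ↦ (b⊗c)ᵀ M (b⊗c) over all pairs of unit vectors (‖b‖ = ‖c‖ = 1), which in turn agrees with maximizing the Rayleigh-type quotient (b⊗c)ᵀ M (b⊗c) / (‖b‖²‖c‖²) over nonzero b, c. -/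

import Mathlib

open Finset

/-- The rank-one least-squares functional. -/
noncomputable def J1 {I J K : ℕ} (T : Fin I → Fin J → Fin K → ℝ)
    (a : Fin I → ℝ) (b : Fin J → ℝ) (c : Fin K → ℝ) : ℝ :=
  (1 / 2) * ∑ i, ∑ j, ∑ k, (T i j k - a i * b j * c k) ^ 2

/-- Squared Euclidean norm. -/
noncomputable def nsq {n : ℕ} (x : Fin n → ℝ) : ℝ := ∑ i, (x i) ^ 2

/-- The contraction `(T •₂,₃ (b,c))ᵢ = ∑_{j,k} T_{ijk} bⱼ cₖ`. -/
noncomputable def T23 {I J K : ℕ} (T : Fin I → Fin J → Fin K → ℝ)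
    (b : Fin J → ℝ) (c : Fin K → ℝ) : Fin I → ℝ :=
  fun i => ∑ j, ∑ k, T i j k * b j * c k

/-- The matrix `M ∈ ℝ^{JK×JK}` with entries `M_{(α,β),(γ,δ)} = ∑ᵢ T_{iαβ} T_{iγδ}`. -/
noncomputable def Mmat {I J K : ℕ} (T : Fin I → Fin J → Fin K → ℝ) :
    Matrix (Fin J × Fin K) (Fin J × Fin K) ℝ :=
  Matrix.of fun p q => ∑ i, T i p.1 p.2 * T i q.1 q.2

/-- The quadratic form `(b⊗c)ᵀ M (b⊗c)`. -/
noncomputable def quadM {I J K : ℕ} (T : Fin I → Fin J → Fin K → ℝ)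
    (b : Fin J → ℝ) (c : Fin K → ℝ) : ℝ :=
  ∑ p : Fin J × Fin K, ∑ q : Fin J × Fin K,
    (b p.1 * c p.2) * Mmat T p q * (b q.1 * c q.2)

/- ----------------- auxiliary lemmas ----------------- -/

lemma nsq_nonneg {n : ℕ} (x : Fin n → ℝ) : 0 ≤ nsq x :=
  Finset.sum_nonneg fun i _ => sq_nonneg _

lemma nsq_eq_zero {n : ℕ} {x : Fin n → ℝ} (h : nsq x = 0) : x = 0 := by
  funext i
  have := (Finset.sum_eq_zero_iff_of_nonneg (fun i _ => sq_nonneg (x i))).1 h i (mem_univ i)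
  simpa [pow_eq_zero_iff] using this

lemma nsq_pos {n : ℕ} {x : Fin n → ℝ} (h : x ≠ 0) : 0 < nsq x :=
  lt_of_le_of_ne (nsq_nonneg x) fun h0 => h (nsq_eq_zero h0.symm)

lemma T23_apply {I J K : ℕ} (T : Fin I → Fin J → Fin K → ℝ) (b : Fin J → ℝ)
    (c : Fin K → ℝ) (i : Fin I) :
    T23 T b c i = ∑ p : Fin J × Fin K, T i p.1 p.2 * (b p.1 * c p.2) := by
  rw [T23, Fintype.sum_prod_type]
  exact Finset.sum_congr rfl fun j _ => Finset.sum_congr rfl fun k _ => by ring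

lemma quadM_eq {I J K : ℕ} (T : Fin I → Fin J → Fin K → ℝ) (b : Fin J → ℝ) (c : Fin K → ℝ) :
    quadM T b c = nsq (T23 T b c) := by
  calc quadM T b c
      = ∑ p : Fin J × Fin K, ∑ q : Fin J × Fin K, ∑ i,
          (T i p.1 p.2 * (b p.1 * c p.2)) * (T i q.1 q.2 * (b q.1 * c q.2)) := by
        rw [quadM]
        refine Finset.sum_congr rfl fun p _ => Finset.sum_congr rfl fun q _ => ?_
        rw [Mmat, Matrix.of_apply, Finset.mul_sum, Finset.sum_mul]
        exact Finset.sum_congr rfl fun i _ => by ring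
    _ = ∑ p : Fin J × Fin K, ∑ i, ∑ q : Fin J × Fin K,
          (T i p.1 p.2 * (b p.1 * c p.2)) * (T i q.1 q.2 * (b q.1 * c q.2)) :=
        Finset.sum_congr rfl fun p _ => Finset.sum_comm
    _ = ∑ i, ∑ p : Fin J × Fin K, ∑ q : Fin J × Fin K,
          (T i p.1 p.2 * (b p.1 * c p.2)) * (T i q.1 q.2 * (b q.1 * c q.2)) :=
        Finset.sum_comm
    _ = nsq (T23 T b c) := by
        rw [nsq]
        refine Finset.sum_congr rfl fun i _ => ?_
        rw [T23_apply, sq, Finset.sum_mul_sum]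

lemma quadM_nonneg {I J K : ℕ} (T : Fin I → Fin J → Fin K → ℝ) (b : Fin J → ℝ)
    (c : Fin K → ℝ) : 0 ≤ quadM T b c := by
  rw [quadM_eq]; exact nsq_nonneg _

lemma sum_comb {n : ℕ} (f g h : Fin n → ℝ) :
    (∑ i, f i) - (∑ i, g i) + (∑ i, h i) = ∑ i, (f i - g i + h i) := by
  rw [← Finset.sum_sub_distrib, ← Finset.sum_add_distrib]

lemma sq_expand {I J K : ℕ} (T : Fin I → Fin J → Fin K → ℝ) (a : Fin I → ℝ)
    (b : Fin J → ℝ) (c : Fin K → ℝ) (i : Fin I) :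
    ∑ j, ∑ k, (T i j k - a i * b j * c k)^2
      = (∑ j, ∑ k, (T i j k)^2) - 2 * (a i * T23 T b c i) + a i^2 * (nsq b * nsq c) := by
  have hB : 2 * (a i * T23 T b c i) = ∑ j, ∑ k, 2 * a i * (T i j k * b j * c k) := by
    simp only [T23, Finset.mul_sum]
    exact Finset.sum_congr rfl fun j _ => Finset.sum_congr rfl fun k _ => by ring
  have hC : a i^2 * (nsq b * nsq c) = ∑ j, ∑ k, a i^2 * (b j^2 * c k^2) := by
    simp only [nsq, Finset.mul_sum, Finset.sum_mul]
    exact Finset.sum_comm.trans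
      (Finset.sum_congr rfl fun j _ => Finset.sum_congr rfl fun k _ => by ring)
  rw [hB, hC, sum_comb]
  refine Finset.sum_congr rfl fun j _ => ?_
  rw [sum_comb]
  exact Finset.sum_congr rfl fun k _ => by ring

lemma J1_eq {I J K : ℕ} (T : Fin I → Fin J → Fin K → ℝ) (a : Fin I → ℝ)
    (b : Fin J → ℝ) (c : Fin K → ℝ) :
    J1 T a b c = (1/2) * ((∑ i, ∑ j, ∑ k, (T i j k)^2)
      - (2 * (∑ i, a i * T23 T b c i) - nsq a * (nsq b * nsq c))) := by
  rw [J1]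
  congr 1
  rw [Finset.sum_congr rfl fun i _ => sq_expand T a b c i,
    Finset.sum_add_distrib, Finset.sum_sub_distrib, ← Finset.mul_sum, ← Finset.sum_mul]
  simp only [nsq]
  ring

lemma T23_smul {I J K : ℕ} (T : Fin I → Fin J → Fin K → ℝ) (s t : ℝ)
    (b : Fin J → ℝ) (c : Fin K → ℝ) (i : Fin I) :
    T23 T (fun j => s * b j) (fun k => t * c k) i = (s * t) * T23 T b c i := by
  simp only [T23, Finset.mul_sum]
  exact Finset.sum_congr rfl fun j _ => Finset.sum_congr rfl fun k _ => by ring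

lemma quadM_smul {I J K : ℕ} (T : Fin I → Fin J → Fin K → ℝ) (s t : ℝ)
    (b : Fin J → ℝ) (c : Fin K → ℝ) :
    quadM T (fun j => s * b j) (fun k => t * c k) = (s * t)^2 * quadM T b c := by
  rw [quadM_eq, quadM_eq]
  simp only [nsq, Finset.mul_sum]
  exact Finset.sum_congr rfl fun i _ => by rw [T23_smul]; ring

lemma quadM_zero_left {I J K : ℕ} (T : Fin I → Fin J → Fin K → ℝ) (c : Fin K → ℝ) :
    quadM T 0 c = 0 := by
  rw [quadM_eq]
  have : T23 T 0 c = 0 := by funext i; simp [T23]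
  simp [this, nsq]

lemma quadM_zero_right {I J K : ℕ} (T : Fin I → Fin J → Fin K → ℝ) (b : Fin J → ℝ) :
    quadM T b 0 = 0 := by
  rw [quadM_eq]
  have : T23 T b 0 = 0 := by funext i; simp [T23]
  simp [this, nsq]

/-- From maximality on the product of unit spheres, the scale-invariant bound. -/
lemma scale_bound {I J K : ℕ} (T : Fin I → Fin J → Fin K → ℝ) {b : Fin J → ℝ}
    {c : Fin K → ℝ} (hb : nsq b = 1) (hc : nsq c = 1)
    (hmax : ∀ (b' : Fin J → ℝ) (c' : Fin K → ℝ), nsq b' = 1 → nsq c' = 1 →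
      quadM T b' c' ≤ quadM T b c) :
    ∀ (b' : Fin J → ℝ) (c' : Fin K → ℝ), quadM T b' c' ≤ quadM T b c * (nsq b' * nsq c') := by
  intro b' c'
  by_cases hb' : b' = 0
  · subst hb'
    have : nsq (0 : Fin J → ℝ) = 0 := by simp [nsq]
    rw [quadM_zero_left, this]
    ring_nf
    exact le_refl 0
  by_cases hc' : c' = 0
  · subst hc'
    have : nsq (0 : Fin K → ℝ) = 0 := by simp [nsq]
    rw [quadM_zero_right, this]
    ring_nf
    exact le_refl 0
  have hbp : 0 < nsq b' := nsq_pos hb'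
  have hcp : 0 < nsq c' := nsq_pos hc'
  set sb := Real.sqrt (nsq b') with hsb
  set sc := Real.sqrt (nsq c') with hsc
  have hsbp : 0 < sb := Real.sqrt_pos.2 hbp
  have hscp : 0 < sc := Real.sqrt_pos.2 hcp
  have hsb2 : sb^2 = nsq b' := Real.sq_sqrt hbp.le
  have hsc2 : sc^2 = nsq c' := Real.sq_sqrt hcp.le
  have hbhat : nsq (fun j => sb⁻¹ * b' j) = 1 := by
    have : nsq (fun j => sb⁻¹ * b' j) = (sb⁻¹)^2 * nsq b' := by
      simp only [nsq, Finset.mul_sum]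
      exact Finset.sum_congr rfl fun j _ => by ring
    rw [this, ← hsb2]
    field_simp
  have hchat : nsq (fun k => sc⁻¹ * c' k) = 1 := by
    have : nsq (fun k => sc⁻¹ * c' k) = (sc⁻¹)^2 * nsq c' := by
      simp only [nsq, Finset.mul_sum]
      exact Finset.sum_congr rfl fun k _ => by ring
    rw [this, ← hsc2]
    field_simp
  have key : quadM T (fun j => sb⁻¹ * b' j) (fun k => sc⁻¹ * c' k) ≤ quadM T b c :=
    hmax _ _ hbhat hchat
  rw [quadM_smul] at key
  have h1 : (sb⁻¹ * sc⁻¹)^2 = (nsq b' * nsq c')⁻¹ := by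
    rw [mul_pow, ← hsb2, ← hsc2]
    field_simp
  rw [h1] at key
  have hprod : 0 < nsq b' * nsq c' := mul_pos hbp hcp
  calc quadM T b' c' = (nsq b' * nsq c')⁻¹ * quadM T b' c' * (nsq b' * nsq c') := by
        field_simp
    _ ≤ quadM T b c * (nsq b' * nsq c') := by
        apply mul_le_mul_of_nonneg_right key hprod.le

/-- Key inequality: the "gain" term is bounded by `Q`. -/
lemma gain_le {I J K : ℕ} (T : Fin I → Fin J → Fin K → ℝ) {Q : ℝ} (hQ0 : 0 ≤ Q)
    (hQ : ∀ (b' : Fin J → ℝ) (c' : Fin K → ℝ), quadM T b' c' ≤ Q * (nsq b' * nsq c'))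
    (a : Fin I → ℝ) (b : Fin J → ℝ) (c : Fin K → ℝ) :
    2 * (∑ i, a i * T23 T b c i) - nsq a * (nsq b * nsq c) ≤ Q := by
  have hs0 : 0 ≤ nsq b * nsq c := mul_nonneg (nsq_nonneg b) (nsq_nonneg c)
  rcases eq_or_lt_of_le hs0 with hs | hs
  · -- degenerate case : b = 0 or c = 0
    have hu : T23 T b c = 0 := by
      rcases mul_eq_zero.1 hs.symm with h | h
      · have hb : b = 0 := nsq_eq_zero h
        funext i; simp [T23, hb]
      · have hc : c = 0 := nsq_eq_zero h
        funext i; simp [T23, hc]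
    rw [hu, ← hs]
    simp
    exact hQ0
  · set s := nsq b * nsq c with hsdef
    set u := T23 T b c with hu
    set A := ∑ i, a i * u i with hA
    have h2 : ∑ i, (s * a i - u i)^2 = s^2 * nsq a - 2*s*A + nsq u := by
      rw [hA, nsq, nsq, Finset.mul_sum, Finset.mul_sum, sum_comb]
      exact Finset.sum_congr rfl fun i _ => by ring
    have h1 : 0 ≤ s^2 * nsq a - 2*s*A + nsq u := by
      rw [← h2]; exact Finset.sum_nonneg fun i _ => sq_nonneg _
    have h3 : nsq u ≤ Q * s := by rw [hu, ← quadM_eq]; exact hQ b c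
    have hmul : (2 * A - nsq a * s) * s ≤ Q * s := by nlinarith
    exact le_of_mul_le_mul_right hmul hs

/-- Value of `J1` at `(T23 b c, b, c)` for unit `b, c`. -/
lemma J1_at {I J K : ℕ} (T : Fin I → Fin J → Fin K → ℝ) {b : Fin J → ℝ}
    {c : Fin K → ℝ} (hb : nsq b = 1) (hc : nsq c = 1) :
    J1 T (T23 T b c) b c = (1/2) * ((∑ i, ∑ j, ∑ k, (T i j k)^2) - quadM T b c) := by
  rw [J1_eq, hb, hc, quadM_eq]
  have h : ∑ i, T23 T b c i * T23 T b c i = nsq (T23 T b c) := by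
    rw [nsq]; exact Finset.sum_congr rfl fun i _ => (sq (T23 T b c i)).symm
  rw [h]
  ring

/-- From the scale-invariant bound, global minimality. -/
lemma global_min {I J K : ℕ} (T : Fin I → Fin J → Fin K → ℝ) {b : Fin J → ℝ}
    {c : Fin K → ℝ} (hb : nsq b = 1) (hc : nsq c = 1)
    (hQ : ∀ (b' : Fin J → ℝ) (c' : Fin K → ℝ),
      quadM T b' c' ≤ quadM T b c * (nsq b' * nsq c')) :
    ∀ (a' : Fin I → ℝ) (b' : Fin J → ℝ) (c' : Fin K → ℝ),
      J1 T (T23 T b c) b c ≤ J1 T a' b' c' := by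
  intro a' b' c'
  rw [J1_at T hb hc, J1_eq]
  have := gain_le T (quadM_nonneg T b c) hQ a' b' c'
  linarith

/-- A minimizer of the rank-one least-squares problem always exists; unit vectors `b, c`
together with `a := T•₂,₃(b,c)` form a minimizer iff `(b,c)` maximizes
`(b⊗c)ᵀM(b⊗c)` over pairs of unit vectors, which agrees with maximizing the Rayleigh-type
quotient `(b⊗c)ᵀM(b⊗c)/(‖b‖²‖c‖²)` over nonzero vectors. -/
theorem stmt7 (I J K : ℕ) (hI : 0 < I) (hJ : 0 < J) (hK : 0 < K)
    (T : Fin I → Fin J → Fin K → ℝ) :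
    (∃ (a : Fin I → ℝ) (b : Fin J → ℝ) (c : Fin K → ℝ),
      ∀ (a' : Fin I → ℝ) (b' : Fin J → ℝ) (c' : Fin K → ℝ),
        J1 T a b c ≤ J1 T a' b' c') ∧
    (∀ (b : Fin J → ℝ) (c : Fin K → ℝ), nsq b = 1 → nsq c = 1 →
      ((∀ (a' : Fin I → ℝ) (b' : Fin J → ℝ) (c' : Fin K → ℝ),
          J1 T (T23 T b c) b c ≤ J1 T a' b' c') ↔
        (∀ (b' : Fin J → ℝ) (c' : Fin K → ℝ), nsq b' = 1 → nsq c' = 1 →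
          quadM T b' c' ≤ quadM T b c))) ∧
    (∀ (b : Fin J → ℝ) (c : Fin K → ℝ), nsq b = 1 → nsq c = 1 →
      ((∀ (b' : Fin J → ℝ) (c' : Fin K → ℝ), nsq b' = 1 → nsq c' = 1 →
          quadM T b' c' ≤ quadM T b c) ↔
        (∀ (b' : Fin J → ℝ) (c' : Fin K → ℝ), b' ≠ 0 → c' ≠ 0 →
          quadM T b' c' / (nsq b' * nsq c') ≤ quadM T b c / (nsq b * nsq c)))) := by
  have hnsqJ : Continuous (nsq (n := J)) :=
    continuous_finset_sum _ fun i _ => (continuous_apply i).pow 2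
  have hnsqK : Continuous (nsq (n := K)) :=
    continuous_finset_sum _ fun i _ => (continuous_apply i).pow 2
  refine ⟨?_, ?_, ?_⟩
  · -- existence of a minimizer
    set A : Set ((Fin J → ℝ) × (Fin K → ℝ)) := {p | nsq p.1 = 1 ∧ nsq p.2 = 1} with hA
    have hclosed : IsClosed A := by
      have h1 : IsClosed {p : (Fin J → ℝ) × (Fin K → ℝ) | nsq p.1 = 1} :=
        isClosed_eq (hnsqJ.comp continuous_fst) continuous_const
      have h2 : IsClosed {p : (Fin J → ℝ) × (Fin K → ℝ) | nsq p.2 = 1} :=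
        isClosed_eq (hnsqK.comp continuous_snd) continuous_const
      exact h1.inter h2
    have hbdd : Bornology.IsBounded A := by
      apply Bornology.IsBounded.subset (Metric.isBounded_closedBall (x := 0) (r := 1))
      rintro ⟨b, c⟩ ⟨hb, hc⟩
      rw [Metric.mem_closedBall, dist_zero_right, Prod.norm_def]
      have hone : ∀ {n : ℕ} (x : Fin n → ℝ), nsq x = 1 → ‖x‖ ≤ 1 := by
        intro n x hx
        rw [pi_norm_le_iff_of_nonneg zero_le_one]
        intro i
        have h := Finset.single_le_sum (f := fun i => (x i)^2)
          (fun i _ => sq_nonneg _) (mem_univ i)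
        rw [← nsq, hx] at h
        rw [Real.norm_eq_abs, abs_le]
        constructor <;> nlinarith [h, sq_nonneg (x i + 1), sq_nonneg (x i - 1)]
      exact max_le (hone b hb) (hone c hc)
    have hcpt : IsCompact A := Metric.isCompact_of_isClosed_isBounded hclosed hbdd
    have hne : A.Nonempty := by
      refine ⟨⟨fun j => if j = ⟨0, hJ⟩ then 1 else 0, fun k => if k = ⟨0, hK⟩ then 1 else 0⟩,
        ?_, ?_⟩ <;>
      · simp only [nsq, apply_ite (· ^ (2:ℕ)), one_pow, zero_pow]
        simp
    have hcont : Continuous (fun p : (Fin J → ℝ) × (Fin K → ℝ) => quadM T p.1 p.2) := by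
      unfold quadM
      refine continuous_finset_sum _ fun p _ => continuous_finset_sum _ fun q _ => ?_
      exact ((((continuous_apply p.1).comp continuous_fst).mul
        ((continuous_apply p.2).comp continuous_snd)).mul continuous_const).mul
        (((continuous_apply q.1).comp continuous_fst).mul
        ((continuous_apply q.2).comp continuous_snd))
    obtain ⟨⟨b0, c0⟩, hmem, hmax⟩ := hcpt.exists_isMaxOn hne hcont.continuousOn
    obtain ⟨hb0, hc0⟩ := hmem
    have hb0' : nsq b0 = 1 := hb0
    have hc0' : nsq c0 = 1 := hc0
    have hmax' : ∀ (b' : Fin J → ℝ) (c' : Fin K → ℝ), nsq b' = 1 → nsq c' = 1 →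
        quadM T b' c' ≤ quadM T b0 c0 := by
      intro b' c' hb' hc'
      have h := hmax (a := (b', c')) ⟨hb', hc'⟩
      exact h
    exact ⟨T23 T b0 c0, b0, c0, global_min T hb0' hc0' (scale_bound T hb0' hc0' hmax')⟩
  · -- second part
    intro b c hb hc
    constructor
    · intro hmin b' c' hb' hc'
      have h1 := hmin (T23 T b' c') b' c'
      rw [J1_at T hb hc, J1_at T hb' hc'] at h1
      linarith
    · intro hmax
      exact global_min T hb hc (scale_bound T hb hc hmax)
  · -- third part
    intro b c hb hc
    constructor
    · intro hmax b' c' hb' hc'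
      have hbp : 0 < nsq b' := nsq_pos hb'
      have hcp : 0 < nsq c' := nsq_pos hc'
      rw [hb, hc]
      rw [div_le_iff₀ (mul_pos hbp hcp)]
      have := scale_bound T hb hc hmax b' c'
      simpa using this
    · intro hray b' c' hb' hc'
      have hb'0 : b' ≠ 0 := by
        intro h; rw [h] at hb'; simp [nsq] at hb'
      have hc'0 : c' ≠ 0 := by
        intro h; rw [h] at hc'; simp [nsq] at hc'
      have := hray b' c' hb'0 hc'0
      rw [hb, hc, hb', hc'] at this
      simpa using this
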